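/- Let X be a linear subspace of the space of (a.e.-equivalence classes of) real-valued measurable functions on [0,∞) with Lebesgue measure λ, equipped with a norm ‖·‖ satisfying: (i) if g ∈ X and f is measurable with |f| ≤ |g| a.e., then f ∈ X and ‖f‖ ≤ ‖g‖; and (ii) if f ∈ X and g is measurable and equimeasurable with f (i.e. λ{t : |f(t)| > s} = λ{t : |g(t)| > s} for all s > 0), then g ∈ X and ‖g‖ = ‖f‖. Let 1 < p < ∞ and C > 0, and suppose that every sequence {f_n} in X with ‖f_n‖ = 1 and f_i · f_j = 0 a.e. for i ≠ j has a subsequence {f_{n_k}} with ‖Σ_{k=1}^m a_k f_{n_k}‖ ≤ C (Σ_{k=1}^m |a_k|^p)^{1/p} for all scalars a_1,…,a_m and all m. Then for every step function f = Σ_{i=1}^m λ_i χ_{[u_{i−1},u_i)} in X with 0 = u_0 < u_1 < ⋯ < u_m < ∞ and every real s ≥ 1, the dilated function D_s f defined by (D_s f)(t) = f(t/s) belongs to X and satisfies ‖D_s f‖ ≤ 2^{1/p} C s^{1/p} ‖f‖. -/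

import Mathlib

/-!
Translate a step function `f` supported in `[0, L)` by the multiples `k L`: the translates are
disjoint and equimeasurable with `f`, so after normalisation the `UDS_p` property bounds the norm
of the sum of `n` of them by `C n^{1/p} ‖f‖`. Taking `n = ⌈s⌉ ≤ 2s` and first shrinking every
interval of `f` by the factor `s / n ≤ 1` (which does not increase the norm, by the lattice
property), that sum takes every value on a set of `s` times the measure on which `f` takes it,
hence is equimeasurable with `D_s f`.
-/

open MeasureTheory Finset
/-- Lebesgue measure on `[0,∞)`. -/
noncomputable def muHalfLine : Measure ℝ := volume.restrict (Set.Ici (0 : ℝ))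

open scoped ENNReal

noncomputable def distribution (f : ℝ → ℝ) (r : ℝ) : ℝ≥0∞ := muHalfLine {t | r < |f t|}

theorem distribution_eq_volume (f : ℝ → ℝ) (r : ℝ) :
    distribution f r = volume ({t | r < |f t|} ∩ Set.Ici 0) :=
  Measure.restrict_apply' measurableSet_Ici

theorem distribution_comp_sub {h : ℝ → ℝ} (hh : ∀ t < 0, h t = 0) {c r : ℝ} (hc : 0 ≤ c)
    (hr : 0 ≤ r) : distribution (fun t => h (t - c)) r = distribution h r := by
  have hpos : ∀ x, r < |h x| → 0 ≤ x := fun x hx => by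
    by_contra! hneg
    rw [hh x hneg, abs_zero] at hx
    exact hr.not_gt hx
  have hset : {t | r < |h (t - c)|} ∩ Set.Ici 0 = (· + -c) ⁻¹' ({x | r < |h x|} ∩ Set.Ici 0) := by
    ext t
    simp only [Set.mem_inter_iff, Set.mem_ofPred_eq, Set.mem_Ici, Set.mem_preimage,
      ← sub_eq_add_neg]
    exact ⟨fun ⟨ht, _⟩ => ⟨ht, hpos _ ht⟩, fun ⟨ht, htc⟩ => ⟨ht, by linarith⟩⟩
  rw [distribution_eq_volume, distribution_eq_volume, hset, measure_preimage_add_right]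

theorem distribution_comp_div (h : ℝ → ℝ) {s : ℝ} (hs : 0 < s) (r : ℝ) :
    distribution (fun t => h (t / s)) r = ENNReal.ofReal s * distribution h r := by
  have hset : {t | r < |h (t / s)|} ∩ Set.Ici 0 = (· * s⁻¹) ⁻¹' ({x | r < |h x|} ∩ Set.Ici 0) := by
    ext t
    simp [div_eq_mul_inv, hs]
  rw [distribution_eq_volume, distribution_eq_volume, hset,
    Real.volume_preimage_mul_right (inv_ne_zero hs.ne'), inv_inv, abs_of_pos hs]

theorem sum_apply_eq_of_ne_zero {ι : Type*} {J : Finset ι} {g : ι → ℝ → ℝ}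
    (hdisj : ∀ i ∈ J, ∀ j ∈ J, i ≠ j → ∀ t, g i t * g j t = 0) {j : ι} (hj : j ∈ J) {t : ℝ}
    (ht : g j t ≠ 0) : (∑ i ∈ J, g i) t = g j t := by
  rw [Finset.sum_apply, Finset.sum_eq_single_of_mem j hj]
  intro i hi hij
  simpa [ht] using hdisj i hi j hj hij t

theorem distribution_sum {ι : Type*} (J : Finset ι) {g : ι → ℝ → ℝ} (hg : ∀ j, Measurable (g j))
    (hdisj : ∀ i ∈ J, ∀ j ∈ J, i ≠ j → ∀ t, g i t * g j t = 0) {r : ℝ} (hr : 0 ≤ r) :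
    distribution (∑ j ∈ J, g j) r = ∑ j ∈ J, distribution (g j) r := by
  have hne : ∀ {x : ℝ}, r < |x| → x ≠ 0 := fun hx h0 => by
    rw [h0, abs_zero] at hx; exact hr.not_gt hx
  have hset : {t | r < |(∑ j ∈ J, g j) t|} = ⋃ j ∈ J, {t | r < |g j t|} := by
    ext t
    simp only [Set.mem_ofPred_eq, Set.mem_iUnion, exists_prop]
    constructor
    · intro ht
      rw [Finset.sum_apply] at ht
      obtain ⟨j, hj, hgj⟩ := Finset.exists_ne_zero_of_sum_ne_zero (hne ht)
      exact ⟨j, hj, by rwa [← Finset.sum_apply, sum_apply_eq_of_ne_zero hdisj hj hgj] at ht⟩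
    · rintro ⟨j, hj, ht⟩
      rwa [sum_apply_eq_of_ne_zero hdisj hj (hne ht)]
  rw [distribution, hset, measure_biUnion_finset]
  · rfl
  · intro i hi j hj hij
    refine Set.disjoint_left.mpr fun t hti htj => ?_
    exact mul_ne_zero (hne hti) (hne htj) (hdisj i hi j hj hij t)
  · exact fun j _ => measurableSet_lt measurable_const (hg j).abs

noncomputable def stepFun {ι : Type*} (J : Finset ι) (v a b : ι → ℝ) : ℝ → ℝ :=
  fun t => ∑ j ∈ J, v j * (Set.Ico (a j) (b j)).indicator 1 t

section StepFun

variable {ι : Type*} {J : Finset ι} {v a b : ι → ℝ}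

theorem measurable_stepFun (J : Finset ι) (v a b : ι → ℝ) : Measurable (stepFun J v a b) :=
  Finset.measurable_sum _ fun _ _ =>
    measurable_const.mul (measurable_const.indicator measurableSet_Ico)

theorem stepFun_eq_of_mem (hdisj : (J : Set ι).PairwiseDisjoint fun j => Set.Ico (a j) (b j))
    {j : ι} (hj : j ∈ J) {t : ℝ} (ht : t ∈ Set.Ico (a j) (b j)) : stepFun J v a b t = v j := by
  rw [stepFun, Finset.sum_eq_single_of_mem j hj]
  · rw [Set.indicator_of_mem ht, Pi.one_apply, mul_one]
  · intro i hi hij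
    rw [Set.indicator_of_notMem (Set.disjoint_right.mp (hdisj hi hj hij) ht), mul_zero]

theorem exists_mem_Ico_of_stepFun_ne_zero {t : ℝ} (ht : stepFun J v a b t ≠ 0) :
    ∃ j ∈ J, t ∈ Set.Ico (a j) (b j) := by
  obtain ⟨j, hj, hne⟩ := Finset.exists_ne_zero_of_sum_ne_zero ht
  exact ⟨j, hj, by_contra fun h => hne (by rw [Set.indicator_of_notMem h, mul_zero])⟩

theorem abs_stepFun_le_of_subset {a' b' : ι → ℝ}
    (hsub : ∀ j ∈ J, Set.Ico (a' j) (b' j) ⊆ Set.Ico (a j) (b j))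
    (hdisj : (J : Set ι).PairwiseDisjoint fun j => Set.Ico (a j) (b j)) (t : ℝ) :
    |stepFun J v a' b' t| ≤ |stepFun J v a b t| := by
  by_cases ht : stepFun J v a' b' t = 0
  · rw [ht, abs_zero]; exact abs_nonneg _
  obtain ⟨j, hj, htj⟩ := exists_mem_Ico_of_stepFun_ne_zero ht
  rw [stepFun_eq_of_mem (hdisj.mono_on hsub) hj htj, stepFun_eq_of_mem hdisj hj (hsub j hj htj)]

theorem distribution_stepFun (hdisj : (J : Set ι).PairwiseDisjoint fun j => Set.Ico (a j) (b j))
    (ha : ∀ j ∈ J, 0 ≤ a j) {r : ℝ} (hr : 0 ≤ r) :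
    distribution (stepFun J v a b) r = ∑ j ∈ J with r < |v j|, ENNReal.ofReal (b j - a j) := by
  have hset : {t | r < |stepFun J v a b t|} =
      ⋃ j ∈ J.filter (fun j => r < |v j|), Set.Ico (a j) (b j) := by
    ext t
    simp only [Set.mem_ofPred_eq, Set.mem_iUnion, Finset.mem_filter, exists_prop]
    constructor
    · intro ht
      have hne : stepFun J v a b t ≠ 0 := fun h0 => by
        rw [h0, abs_zero] at ht; exact hr.not_gt ht
      obtain ⟨j, hj, htj⟩ := exists_mem_Ico_of_stepFun_ne_zero hne
      exact ⟨j, ⟨hj, by rwa [stepFun_eq_of_mem hdisj hj htj] at ht⟩, htj⟩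
    · rintro ⟨j, ⟨hj, hvj⟩, htj⟩
      rwa [stepFun_eq_of_mem hdisj hj htj]
  have hsub : (⋃ j ∈ J.filter (fun j => r < |v j|), Set.Ico (a j) (b j)) ⊆ Set.Ici 0 := by
    simp only [Set.iUnion_subset_iff, Finset.mem_filter]
    exact fun j hj t ht => (ha j hj.1).trans ht.1
  rw [distribution_eq_volume, hset, Set.inter_eq_left.mpr hsub,
    measure_biUnion_finset (hdisj.subset (Finset.coe_subset.mpr (Finset.filter_subset _ _)))
      fun _ _ => measurableSet_Ico]
  simp_rw [Real.volume_Ico]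

theorem Ico_add_mul_sub_subset {x y θ : ℝ} (hxy : x ≤ y) (hθ : θ ≤ 1) :
    Set.Ico x (x + θ * (y - x)) ⊆ Set.Ico x y :=
  Set.Ico_subset_Ico_right (by nlinarith)

theorem distribution_stepFun_shrink
    (hdisj : (J : Set ι).PairwiseDisjoint fun j => Set.Ico (a j) (b j))
    (ha : ∀ j ∈ J, 0 ≤ a j) (hab : ∀ j ∈ J, a j ≤ b j) {θ : ℝ} (hθ₀ : 0 ≤ θ) (hθ₁ : θ ≤ 1)
    {r : ℝ} (hr : 0 ≤ r) :
    distribution (stepFun J v a fun j => a j + θ * (b j - a j)) r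
      = ENNReal.ofReal θ * distribution (stepFun J v a b) r := by
  have hdisj' := hdisj.mono_on fun j hj => Ico_add_mul_sub_subset (hab j hj) hθ₁
  rw [distribution_stepFun hdisj' ha hr, distribution_stepFun hdisj ha hr, Finset.mul_sum]
  refine Finset.sum_congr rfl fun j _ => ?_
  rw [add_sub_cancel_left, ENNReal.ofReal_mul hθ₀]

end StepFun

theorem MonotoneOn.pairwiseDisjoint_Ico_succ {u : ℕ → ℝ} {m : ℕ} (hu : MonotoneOn u (Set.Iic m)) :
    (range m : Set ℕ).PairwiseDisjoint fun i => Set.Ico (u i) (u (i + 1)) := by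
  have key : ∀ i j, i < j → j < m →
      Disjoint (Set.Ico (u i) (u (i + 1))) (Set.Ico (u j) (u (j + 1))) :=
    fun i j hij hj => Set.Ico_disjoint_Ico_same.mono_right
      (Set.Ico_subset_Ico_left (hu (Set.mem_Iic.mpr (by omega)) (Set.mem_Iic.mpr hj.le) hij))
  intro i hi j hj hij
  simp only [coe_range, Set.mem_Iio] at hi hj
  rcases hij.lt_or_gt with h | h
  · exact key i j h hj
  · exact (key j i h hi).symm

theorem MonotoneOn.mem_Ico_of_stepFun_ne_zero {u v : ℕ → ℝ} {m : ℕ} (hu : MonotoneOn u (Set.Iic m))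
    {t : ℝ} (ht : stepFun (range m) v u (fun i => u (i + 1)) t ≠ 0) : t ∈ Set.Ico (u 0) (u m) := by
  obtain ⟨i, hi, hti⟩ := exists_mem_Ico_of_stepFun_ne_zero ht
  have hi : i < m := mem_range.mp hi
  exact ⟨(hu (Set.mem_Iic.mpr (Nat.zero_le _)) (Set.mem_Iic.mpr hi.le) (Nat.zero_le _)).trans hti.1,
    hti.2.trans_le (hu (Set.mem_Iic.mpr hi) (Set.mem_Iic.mpr le_rfl) hi)⟩

theorem MonotoneOn.exists_shrink_stepFun {u v : ℕ → ℝ} {m : ℕ} (hu : MonotoneOn u (Set.Iic m))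
    (hu0 : 0 ≤ u 0) {θ : ℝ} (hθ₀ : 0 ≤ θ) (hθ₁ : θ ≤ 1) :
    ∃ g : ℝ → ℝ, Measurable g ∧
      (∀ t, |g t| ≤ |stepFun (range m) v u (fun i => u (i + 1)) t|) ∧
      (∀ t, g t ≠ 0 → t ∈ Set.Ico (u 0) (u m)) ∧
      ∀ r, 0 ≤ r → distribution g r =
        ENNReal.ofReal θ * distribution (stepFun (range m) v u fun i => u (i + 1)) r := by
  have hIic : ∀ {i}, i ≤ m → i ∈ Set.Iic m := Set.mem_Iic.mpr
  have hu_succ : ∀ i ∈ range m, u i ≤ u (i + 1) := fun i hi =>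
    hu (hIic (mem_range.mp hi).le) (hIic (mem_range.mp hi)) (Nat.le_succ i)
  have hu_nonneg : ∀ i ∈ range m, 0 ≤ u i := fun i hi =>
    hu0.trans (hu (hIic (Nat.zero_le m)) (hIic (mem_range.mp hi).le) (Nat.zero_le i))
  have hdisj := hu.pairwiseDisjoint_Ico_succ
  have hle := abs_stepFun_le_of_subset (v := v)
    (fun i hi => Ico_add_mul_sub_subset (hu_succ i hi) hθ₁) hdisj
  refine ⟨_, measurable_stepFun _ _ _ _, hle, fun t ht => hu.mem_Ico_of_stepFun_ne_zero (v := v) ?_,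
    fun r hr => distribution_stepFun_shrink hdisj hu_nonneg hu_succ hθ₀ hθ₁ hr⟩
  exact fun h0 => ht (abs_nonpos_iff.mp ((hle t).trans_eq (by rw [h0, abs_zero])))

theorem Nat.eq_of_sub_mul_mem_Ico {L t : ℝ} {i j : ℕ} (hi : t - i * L ∈ Set.Ico 0 L)
    (hj : t - j * L ∈ Set.Ico 0 L) : i = j := by
  by_contra hij
  wlog hlt : i < j generalizing i j
  · exact this hj hi (Ne.symm hij) (lt_of_le_of_ne (not_lt.mp hlt) (Ne.symm hij))
  have hij' : (i : ℝ) + 1 ≤ j := by exact_mod_cast hlt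
  have hL : 0 < L := hi.1.trans_lt hi.2
  nlinarith [hi.1, hi.2, hj.1, hj.2]

def HasUDS (Mem : (ℝ → ℝ) → Prop) (Nrm : (ℝ → ℝ) → ℝ) (p C : ℝ) : Prop :=
  ∀ f : ℕ → ℝ → ℝ, (∀ n, Mem (f n)) → (∀ n, Nrm (f n) = 1) →
    (∀ i j, i ≠ j → ∀ᵐ t ∂muHalfLine, f i t * f j t = 0) →
    ∃ φ : ℕ → ℕ, StrictMono φ ∧ ∀ (m : ℕ) (a : ℕ → ℝ),
      Nrm (fun t => ∑ k ∈ range m, a k * f (φ k) t) ≤ C * (∑ k ∈ range m, |a k| ^ p) ^ (1 / p)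

def IsRearrangementInvariant (Mem : (ℝ → ℝ) → Prop) (Nrm : (ℝ → ℝ) → ℝ) : Prop :=
  ∀ f g : ℝ → ℝ, Mem f → Measurable g → (∀ r : ℝ, 0 < r → distribution f r = distribution g r) →
    Mem g ∧ Nrm g = Nrm f

namespace HasUDS

variable {Mem : (ℝ → ℝ) → Prop} {Nrm : (ℝ → ℝ) → ℝ} {p C : ℝ}

theorem exists_nrm_sum_le (hUDS : HasUDS Mem Nrm p C) (hp : 0 < p) (hMzero : Mem 0)
    (hMadd : ∀ f g, Mem f → Mem g → Mem (f + g)) (hMsmul : ∀ (c : ℝ) f, Mem f → Mem (c • f))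
    (hNtri : ∀ f g, Mem f → Mem g → Nrm (f + g) ≤ Nrm f + Nrm g)
    (hNhom : ∀ (c : ℝ) f, Mem f → Nrm (c • f) = |c| * Nrm f)
    {g : ℕ → ℝ → ℝ} (hg : ∀ k, Mem (g k)) {c : ℝ} (hc : 0 ≤ c) (hgc : ∀ k, Nrm (g k) = c)
    (hdisj : ∀ i j, i ≠ j → ∀ t, g i t * g j t = 0) (n : ℕ) :
    ∃ φ : ℕ → ℕ, StrictMono φ ∧ Nrm (∑ k ∈ range n, g (φ k)) ≤ C * n ^ (1 / p) * c := by
  rcases hc.eq_or_lt with rfl | hc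
  · have hN0 : Nrm 0 = 0 := by simpa using hNhom 0 0 hMzero
    refine ⟨id, strictMono_id, ?_⟩
    calc Nrm (∑ k ∈ range n, g (id k)) ≤ ∑ k ∈ range n, Nrm (g k) :=
          Finset.le_sum_of_subadditive_on_pred Nrm Mem hN0.le hNtri hMadd g fun k _ => hg k
      _ = C * n ^ (1 / p) * 0 := by simp [hgc]
  -- normalise, then take all coefficients equal to `c`
  obtain ⟨φ, hφ, hbound⟩ := hUDS (fun k => c⁻¹ • g k) (fun k => hMsmul _ _ (hg k))
    (fun k => by rw [hNhom _ _ (hg k), hgc, abs_inv, abs_of_pos hc, inv_mul_cancel₀ hc.ne'])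
    (fun i j hij => Filter.Eventually.of_forall fun t => by
      rw [Pi.smul_apply, Pi.smul_apply, smul_eq_mul, smul_eq_mul, mul_mul_mul_comm,
        hdisj i j hij t, mul_zero])
  refine ⟨φ, hφ, ?_⟩
  convert hbound n fun _ => c using 1
  · congr 1
    ext t
    simp [Finset.sum_apply, mul_inv_cancel_left₀ hc.ne']
  · rw [sum_const, card_range, nsmul_eq_mul, abs_of_pos hc,
      Real.mul_rpow (Nat.cast_nonneg _) (by positivity), ← Real.rpow_mul hc.le,
      mul_one_div_cancel hp.ne', Real.rpow_one, mul_assoc]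

theorem exists_distribution_eq_nsmul (hUDS : HasUDS Mem Nrm p C) (hp : 0 < p) (hMzero : Mem 0)
    (hMadd : ∀ f g, Mem f → Mem g → Mem (f + g)) (hMsmul : ∀ (c : ℝ) f, Mem f → Mem (c • f))
    (hNtri : ∀ f g, Mem f → Mem g → Nrm (f + g) ≤ Nrm f + Nrm g)
    (hNhom : ∀ (c : ℝ) f, Mem f → Nrm (c • f) = |c| * Nrm f)
    (hri : IsRearrangementInvariant Mem Nrm) {h : ℝ → ℝ} (hh : Mem h) (hmeas : Measurable h)
    (hNh : 0 ≤ Nrm h) {L : ℝ} (hL : 0 ≤ L) (hsupp : ∀ t, h t ≠ 0 → t ∈ Set.Ico 0 L) (n : ℕ) :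
    ∃ H, Mem H ∧ (∀ r, 0 ≤ r → distribution H r = n * distribution h r) ∧
      Nrm H ≤ C * n ^ (1 / p) * Nrm h := by
  set g : ℕ → ℝ → ℝ := fun k t => h (t - k * L)
  have hg_meas : ∀ k, Measurable (g k) := fun k => hmeas.comp (measurable_id.sub_const _)
  have hg_dist : ∀ k r, 0 ≤ r → distribution (g k) r = distribution h r := fun k r hr =>
    distribution_comp_sub (fun t ht => by_contra fun hne => ht.not_ge (hsupp t hne).1)
      (by positivity) hr
  have hg : ∀ k, Mem (g k) ∧ Nrm (g k) = Nrm h := fun k =>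
    hri h (g k) hh (hg_meas k) fun r hr => (hg_dist k r hr.le).symm
  have hdisj : ∀ i j, i ≠ j → ∀ t, g i t * g j t = 0 := fun i j hij t => by
    by_contra hne
    obtain ⟨hi, hj⟩ := mul_ne_zero_iff.mp hne
    exact hij (Nat.eq_of_sub_mul_mem_Ico (hsupp _ hi) (hsupp _ hj))
  obtain ⟨φ, hφ, hbound⟩ := hUDS.exists_nrm_sum_le hp hMzero hMadd hMsmul hNtri hNhom
    (fun k => (hg k).1) hNh (fun k => (hg k).2) hdisj n
  refine ⟨∑ k ∈ range n, g (φ k), Finset.sum_induction _ Mem hMadd hMzero fun k _ => (hg _).1,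
    fun r hr => ?_, hbound⟩
  rw [distribution_sum _ (fun k => hg_meas _)
    (fun i _ j _ hij => hdisj _ _ (hφ.injective.ne hij)) hr]
  simp [hg_dist _ _ hr]

end HasUDS

/-- Proposition 3(1), intermediate claim: in a rearrangement invariant function space
`(Mem, Nrm)` on `[0,∞)` (a linear subspace of measurable functions whose norm is an ideal norm
depending only on the distribution) with the `UDS_p`-property with constant `C`, every step
function `f` satisfies `‖D_s f‖ ≤ 2^{1/p} C s^{1/p} ‖f‖` for all `s ≥ 1`, where
`(D_s f)(t) = f(t/s)`. -/
theorem statement16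
    (Mem : (ℝ → ℝ) → Prop) (Nrm : (ℝ → ℝ) → ℝ)
    -- `X` is a linear subspace:
    (hMzero : Mem 0)
    (hMadd : ∀ f g : ℝ → ℝ, Mem f → Mem g → Mem (f + g))
    (hMsmul : ∀ (c : ℝ) (f : ℝ → ℝ), Mem f → Mem (c • f))
    -- `Nrm` is a norm on it:
    (hNnonneg : ∀ f : ℝ → ℝ, 0 ≤ Nrm f)
    (hNtri : ∀ f g : ℝ → ℝ, Mem f → Mem g → Nrm (f + g) ≤ Nrm f + Nrm g)
    (hNhom : ∀ (c : ℝ) (f : ℝ → ℝ), Mem f → Nrm (c • f) = |c| * Nrm f)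
    -- (i) the norm is an ideal (lattice) norm:
    (hideal : ∀ f g : ℝ → ℝ, Measurable f → Mem g → (∀ᵐ t ∂muHalfLine, |f t| ≤ |g t|) →
      Mem f ∧ Nrm f ≤ Nrm g)
    -- (ii) the norm is rearrangement invariant:
    (hri : ∀ f g : ℝ → ℝ, Mem f → Measurable g →
      (∀ s : ℝ, 0 < s →
        muHalfLine {t | s < |f t|} = muHalfLine {t | s < |g t|}) →
      Mem g ∧ Nrm g = Nrm f)
    (p C : ℝ) (hp : 1 < p) (hC : 0 < C)
    -- the `UDS_p`-property with constant `C`: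
    (hUDS : ∀ f : ℕ → ℝ → ℝ, (∀ n, Mem (f n)) → (∀ n, Nrm (f n) = 1) →
      (∀ i j, i ≠ j → ∀ᵐ t ∂muHalfLine, f i t * f j t = 0) →
      ∃ φ : ℕ → ℕ, StrictMono φ ∧ ∀ (m : ℕ) (a : ℕ → ℝ),
        Nrm (fun t => ∑ k ∈ Finset.range m, a k * f (φ k) t)
          ≤ C * (∑ k ∈ Finset.range m, |a k| ^ p) ^ (1 / p))
    -- `f` is a step function in `X`:
    (m : ℕ) (u : ℕ → ℝ) (lam : ℕ → ℝ) (hu0 : u 0 = 0)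
    (humono : ∀ i < m, u i < u (i + 1))
    (f : ℝ → ℝ)
    (hf : f = fun t => ∑ i ∈ Finset.range m,
      lam i * Set.indicator (Set.Ico (u i) (u (i + 1))) 1 t)
    (hMemf : Mem f)
    (s : ℝ) (hs : 1 ≤ s) :
    Mem (fun t => f (t / s)) ∧
      Nrm (fun t => f (t / s)) ≤ 2 ^ (1 / p) * C * s ^ (1 / p) * Nrm f := by
  have hs0 : 0 < s := one_pos.trans_le hs
  set n := ⌈s⌉₊
  have hn : (0 : ℝ) < n := Nat.cast_pos.mpr (Nat.ceil_pos.mpr hs0)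
  have hn2s : (n : ℝ) ≤ 2 * s := by linarith [Nat.ceil_lt_add_one hs0.le]
  set θ := s / n
  have hθ₁ : θ ≤ 1 := div_le_one_of_le₀ (Nat.le_ceil s) hn.le
  have hu : MonotoneOn u (Set.Iic m) := monotoneOn_of_le_succ Set.ordConnected_Iic
    fun i _ _ hi => (humono i (Order.succ_le_iff.mp hi)).le
  have hf_step : f = stepFun (range m) lam u fun i => u (i + 1) := hf
  obtain ⟨f', hf'_meas, hf'f, hf'_supp, hf'_dist⟩ := hu.exists_shrink_stepFun (v := lam)
    hu0.ge (by positivity) hθ₁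
  rw [← hf_step] at hf'f hf'_dist
  rw [hu0] at hf'_supp
  have hf' := hideal f' f hf'_meas hMemf (Filter.Eventually.of_forall hf'f)
  obtain ⟨H, hH, hH_dist, hH_nrm⟩ := HasUDS.exists_distribution_eq_nsmul hUDS (by linarith)
    hMzero hMadd hMsmul hNtri hNhom hri hf'.1 hf'_meas (hNnonneg f')
    (hu0 ▸ hu (Set.mem_Iic.mpr (Nat.zero_le m)) (Set.mem_Iic.mpr le_rfl) (Nat.zero_le m)) hf'_supp n
  -- `n` copies of `f'` have the distribution of `D_s f`
  have hD := hri H (fun t => f (t / s)) hH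
    ((hf_step ▸ measurable_stepFun _ _ _ _).comp (measurable_id.div_const s)) fun r hr => by
    change distribution H r = distribution (fun t => f (t / s)) r
    rw [hH_dist r hr.le, hf'_dist r hr.le, distribution_comp_div f hs0, ← mul_assoc,
      ← ENNReal.ofReal_natCast, ← ENNReal.ofReal_mul (Nat.cast_nonneg _), mul_div_cancel₀ _ hn.ne']
  refine ⟨hD.1, ?_⟩
  calc Nrm (fun t => f (t / s)) = Nrm H := hD.2
    _ ≤ C * n ^ (1 / p) * Nrm f' := hH_nrm
    _ ≤ C * (2 * s) ^ (1 / p) * Nrm f := by gcongr; exacts [hNnonneg _, hf'.2]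
    _ = 2 ^ (1 / p) * C * s ^ (1 / p) * Nrm f := by
      rw [Real.mul_rpow zero_le_two hs0.le]; ring
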